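/- For any graph Γ, the spherical growth series of the graph monoid M(Γ) satisfies M(Γ)(t) = C(Γ)(t/(1-t)), where C(Γ) is the spherical growth series of the right-angled Coxeter group W(Γ). Equivalently, for all n ≥ 1, the number m_n of elements of length n in M(Γ) equals Σ_{k=1}^{n} c_k · binomial(n-1,k-1), where c_k is the number of elements of length k in W(Γ). -/

import Mathlib

open scoped Classical

variable {V : Type*} {M : Type*} {G : Type*}

noncomputable def mlen [Monoid M] (f : V → M) (x : M) : ℕ :=
  sInf {n | ∃ w : List V, (w.map f).prod = x ∧ w.length = n}

def mtype [Monoid M] (f : V → M) (x : M) : Set V :=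
  {i | ∃ w : List V, (w.map f).prod = x ∧ w.length = mlen f x ∧ w.getLast? = some i}

def geval [Group G] (f : V → G) : V × Bool → G := fun l => if l.2 then f l.1 else (f l.1)⁻¹

noncomputable def glen [Group G] (f : V → G) (x : G) : ℕ :=
  sInf {n | ∃ w : List (V × Bool), (w.map (geval f)).prod = x ∧ w.length = n}

def gtype [Group G] (f : V → G) (x : G) : Set V :=
  {i | ∃ w : List (V × Bool), (w.map (geval f)).prod = x ∧ w.length = glen f x ∧
    w.getLast?.map Prod.fst = some i}

def graphMonoidRel (Γ : SimpleGraph V) : FreeMonoid V → FreeMonoid V → Prop :=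
  fun a b => ∃ i j, Γ.Adj i j ∧ a = FreeMonoid.of i * FreeMonoid.of j ∧
    b = FreeMonoid.of j * FreeMonoid.of i

abbrev GraphMonoid (Γ : SimpleGraph V) := (conGen (graphMonoidRel Γ)).Quotient

def GraphMonoid.gen (Γ : SimpleGraph V) (i : V) : GraphMonoid Γ :=
  (conGen (graphMonoidRel Γ)).mk' (FreeMonoid.of i)

def raagRels (Γ : SimpleGraph V) : Set (FreeGroup V) :=
  {r | ∃ i j, Γ.Adj i j ∧
    r = FreeGroup.of i * FreeGroup.of j * (FreeGroup.of i)⁻¹ * (FreeGroup.of j)⁻¹}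

abbrev RAAG (Γ : SimpleGraph V) := PresentedGroup (raagRels Γ)

def RAAG.gen (Γ : SimpleGraph V) (i : V) : RAAG Γ := PresentedGroup.of i

def racgRels (Γ : SimpleGraph V) : Set (FreeGroup V) :=
  raagRels Γ ∪ {r | ∃ i, r = FreeGroup.of i * FreeGroup.of i}

abbrev RACG (Γ : SimpleGraph V) := PresentedGroup (racgRels Γ)

def RACG.gen (Γ : SimpleGraph V) (i : V) : RACG Γ := PresentedGroup.of i

noncomputable def cliquePoly [Fintype V] (Γ : SimpleGraph V) : Polynomial ℚ :=
  ∑ k ∈ Finset.range (Fintype.card V + 1), ((Γ.cliqueFinset k).card : ℚ) • Polynomial.X ^ k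

def Branch [LinearOrder V] (Γ : SimpleGraph V) (C' C : Set V) : Prop :=
  ∃ i, i ∉ C' ∧ C = insert i {j ∈ C' | Γ.Adj i j} ∧ ∀ j ∈ C, j ≠ i → j < i

def WeakBranch (Γ : SimpleGraph V) (C' C : Set V) : Prop :=
  ∃ i, i ∉ C' ∧ C = insert i {j ∈ C' | Γ.Adj i j}

noncomputable def WeakBranchF (Γ : SimpleGraph V) (C' C : Finset V) : Prop :=
  ∃ i, i ∉ C' ∧ C = insert i (C'.filter (Γ.Adj i))

noncomputable def linkF [Fintype V] (Γ : SimpleGraph V) (C : Finset V) : Finset V :=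
  Finset.univ.filter fun x => x ∉ C ∧ ∀ c ∈ C, Γ.Adj x c

def LinkRegular [Fintype V] (Γ : SimpleGraph V) : Prop :=
  ∀ C₁ C₂ : Finset V, Γ.IsClique (C₁ : Set V) → Γ.IsClique (C₂ : Set V) →
    C₁.card = C₂.card → (linkF Γ C₁).card = (linkF Γ C₂).card

/-!
Every element of `M(Γ)` can be written uniquely as `a₁ ^ (e₁ + 1) ⋯ a_k ^ (e_k + 1)` where
`a₁ ⋯ a_k` is a word for a square-free element `y` (no word for `y` has two equal adjacent
letters). Existence: prepend the letters of a word one at a time, merging a letter into an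
existing block when it is already a first letter. Uniqueness: `M(Γ)` acts on itself by letting
`i` fix the elements with first letter `i` and prepend `i` to the others; this `collapse` maps the
product to `y` and keeps first letters, so the exponents are peeled off from the left.
The square-free elements of length `k` correspond to the elements of length `k` of `W(Γ)`, which
acts on them by letting `i` delete a leading `i` or else prepend one. There are
`(n - 1).choose (k - 1)` exponent vectors of length `k` with `∑ (eᵢ + 1) = n`. Cancellation and
first letters in `M(Γ)` are handled with the projection lemma: two words are equal in `M(Γ)` iff
they agree after erasing all letters but two non-adjacent ones.
-/

namespace SimpleGraph

variable {W : Type*} (Γ : SimpleGraph V)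

def SwapStep (u v : List V) : Prop :=
  ∃ p q a b, Γ.Adj a b ∧ u = p ++ a :: b :: q ∧ v = p ++ b :: a :: q

def TraceEquiv : List V → List V → Prop :=
  Relation.ReflTransGen Γ.SwapStep

variable {Γ} {u v w u' v' p q : List V} {a b c : V}

theorem SwapStep.symm (h : Γ.SwapStep u v) : Γ.SwapStep v u := by
  obtain ⟨p, q, a, b, hab, rfl, rfl⟩ := h
  exact ⟨p, q, b, a, hab.symm, rfl, rfl⟩

theorem SwapStep.traceEquiv (h : Γ.SwapStep u v) : Γ.TraceEquiv u v :=
  Relation.ReflTransGen.single h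

namespace TraceEquiv

@[refl]
theorem refl (u : List V) : Γ.TraceEquiv u u :=
  Relation.ReflTransGen.refl

theorem trans (h : Γ.TraceEquiv u v) (h' : Γ.TraceEquiv v w) : Γ.TraceEquiv u w :=
  Relation.ReflTransGen.trans h h'

theorem symm (h : Γ.TraceEquiv u v) : Γ.TraceEquiv v u := by
  induction h with
  | refl => rfl
  | tail _ hs ih => exact hs.symm.traceEquiv.trans ih

theorem invariant {β : Type*} (f : List V → β) (hf : ∀ u v, Γ.SwapStep u v → f u = f v)
    (h : Γ.TraceEquiv u v) : f u = f v := by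
  induction h with
  | refl => rfl
  | tail _ hs ih => exact ih.trans (hf _ _ hs)

theorem length_eq (h : Γ.TraceEquiv u v) : u.length = v.length :=
  h.invariant List.length (by rintro _ _ ⟨p, q, a, b, -, rfl, rfl⟩; simp)

theorem append_left (w : List V) (h : Γ.TraceEquiv u v) : Γ.TraceEquiv (w ++ u) (w ++ v) :=
  Relation.ReflTransGen.lift (w ++ ·)
    (by
      rintro _ _ ⟨p, q, a, b, hab, rfl, rfl⟩
      exact ⟨w ++ p, q, a, b, hab, by simp, by simp⟩)
    _ _ h

theorem append_right (w : List V) (h : Γ.TraceEquiv u v) : Γ.TraceEquiv (u ++ w) (v ++ w) :=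
  Relation.ReflTransGen.lift (· ++ w)
    (by
      rintro _ _ ⟨p, q, a, b, hab, rfl, rfl⟩
      exact ⟨p, q ++ w, a, b, hab, by simp, by simp⟩)
    _ _ h

theorem append (h : Γ.TraceEquiv u v) (h' : Γ.TraceEquiv u' v') :
    Γ.TraceEquiv (u ++ u') (v ++ v') :=
  (h.append_right u').trans (h'.append_left v)

theorem cons (a : V) (h : Γ.TraceEquiv u v) : Γ.TraceEquiv (a :: u) (a :: v) :=
  h.append_left [a]

end TraceEquiv

theorem traceEquiv_append_cons (hp : ∀ b ∈ p, Γ.Adj b a) :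
    Γ.TraceEquiv (p ++ a :: q) (a :: (p ++ q)) := by
  induction p with
  | nil => rfl
  | cons c p ih =>
    have hc : Γ.Adj c a := hp c List.mem_cons_self
    exact ((ih fun b hb => hp b (List.mem_cons_of_mem c hb)).cons c).trans
      (SwapStep.traceEquiv ⟨[], p ++ q, c, a, hc, rfl, rfl⟩)

theorem traceEquiv_append_comm (h : ∀ a ∈ u, ∀ b ∈ w, Γ.Adj a b) :
    Γ.TraceEquiv (u ++ w) (w ++ u) := by
  induction u with
  | nil => simp only [List.nil_append, List.append_nil]; rfl
  | cons c u ih =>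
    have hc : ∀ b ∈ w, Γ.Adj b c := fun b hb => (h c List.mem_cons_self b hb).symm
    exact ((ih fun a ha => h a (List.mem_cons_of_mem c ha)).cons c).trans
      (traceEquiv_append_cons hc).symm

namespace TraceEquiv

theorem map {u v : List W} (f : W → V) (h : (Γ.comap f).TraceEquiv u v) :
    Γ.TraceEquiv (u.map f) (v.map f) :=
  Relation.ReflTransGen.lift (List.map f)
    (by
      rintro _ _ ⟨p, q, a, b, hab, rfl, rfl⟩
      exact ⟨p.map f, q.map f, f a, f b, hab, by simp, by simp⟩)
    _ _ h

theorem exists_comap {u : List W} (f : W → V) (h : Γ.TraceEquiv (u.map f) w) :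
    ∃ u', (Γ.comap f).TraceEquiv u u' ∧ u'.map f = w := by
  induction h with
  | refl => exact ⟨u, refl u, rfl⟩
  | tail _ hs ih =>
    obtain ⟨u', hu', rfl⟩ := ih
    obtain ⟨p, q, a, b, hab, hm, rfl⟩ := hs
    obtain ⟨p', r, rfl, rfl, hr⟩ := List.map_eq_append_iff.mp hm
    obtain ⟨a', r', rfl, rfl, hr'⟩ := List.map_eq_cons_iff.mp hr
    obtain ⟨b', q', rfl, rfl, rfl⟩ := List.map_eq_cons_iff.mp hr'
    exact ⟨p' ++ b' :: a' :: q',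
      hu'.trans (SwapStep.traceEquiv ⟨p', q', a', b', hab, rfl, rfl⟩), by simp⟩

theorem flatMap {H : SimpleGraph W} {u v : List W} (f : W → List V)
    (hf : ∀ a b, H.Adj a b → ∀ x ∈ f a, ∀ y ∈ f b, Γ.Adj x y) (h : H.TraceEquiv u v) :
    Γ.TraceEquiv (u.flatMap f) (v.flatMap f) :=
  Relation.ReflTransGen.lift' (List.flatMap f)
    (by
      rintro _ _ ⟨p, q, a, b, hab, rfl, rfl⟩
      have h := ((traceEquiv_append_comm (hf a b hab)).append_right (q.flatMap f)).append_left
        (p.flatMap f)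
      simpa [TraceEquiv, Function.onFun] using h)
    _ _ h

end TraceEquiv

section Projection

variable [DecidableEq V]

def proj (a b : V) (w : List V) : List V :=
  w.filter fun x => x = a ∨ x = b

theorem proj_cons_of_ne (ha : c ≠ a) (hb : c ≠ b) : proj a b (c :: u) = proj a b u := by
  simp [proj, ha, hb]

theorem proj_cons_left : proj a b (a :: u) = a :: proj a b u := by
  simp [proj]

theorem proj_cons_cancel (h : proj a b (c :: u) = proj a b (c :: v)) : proj a b u = proj a b v := by
  by_cases hc : c = a ∨ c = b
  · simpa [proj, hc] using h
  · simpa [proj, hc] using h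

theorem TraceEquiv.proj_eq (hab : ¬ Γ.Adj a b) (h : Γ.TraceEquiv u v) :
    proj a b u = proj a b v := by
  refine h.invariant _ ?_
  rintro _ _ ⟨p, q, x, y, hxy, rfl, rfl⟩
  by_cases hx : x = a ∨ x = b <;> by_cases hy : y = a ∨ y = b
  · exfalso
    rcases hx with rfl | rfl <;> rcases hy with rfl | rfl
    exacts [hxy.ne rfl, hab hxy, hab hxy.symm, hxy.ne rfl]
  all_goals simp [proj, List.filter_append, hx, hy]

theorem exists_eq_append_cons_of_proj (h : ∀ b, ¬ Γ.Adj a b → (proj a b v).head? = some a) :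
    ∃ p q, v = p ++ a :: q ∧ ∀ b ∈ p, Γ.Adj b a := by
  induction v with
  | nil => simpa [proj] using h a (Γ.irrefl)
  | cons c v ih =>
    by_cases hca : c = a
    · exact ⟨[], v, by rw [hca]; rfl, by simp⟩
    have hc : Γ.Adj c a := by
      by_contra hc
      simpa [proj, hca, Ne.symm hca] using h c fun h' => hc h'.symm
    obtain ⟨p, q, rfl, hp⟩ := ih fun b hb => by
      rw [← proj_cons_of_ne hca fun hcb => hb (by rw [← hcb]; exact hc.symm)]
      exact h b hb
    exact ⟨c :: p, q, rfl, by simpa [hc] using hp⟩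

theorem traceEquiv_of_proj_eq (h : ∀ a b, ¬ Γ.Adj a b → proj a b u = proj a b v) :
    Γ.TraceEquiv u v := by
  induction u generalizing v with
  | nil =>
    cases v with
    | nil => rfl
    | cons c v => simpa [proj] using h c c (Γ.irrefl)
  | cons a u ih =>
    obtain ⟨p, q, rfl, hp⟩ := exists_eq_append_cons_of_proj fun b hb => by
      rw [← h a b hb, proj_cons_left]; rfl
    have hv := traceEquiv_append_cons (q := q) hp
    refine ((ih fun x y hxy => ?_).cons a).trans hv.symm
    exact proj_cons_cancel ((h x y hxy).trans (hv.proj_eq hxy))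

end Projection

theorem TraceEquiv.of_cons (h : Γ.TraceEquiv (a :: u) (a :: v)) : Γ.TraceEquiv u v :=
  traceEquiv_of_proj_eq fun _ _ hxy => proj_cons_cancel (h.proj_eq hxy)

theorem TraceEquiv.exists_of_cons (h : Γ.TraceEquiv (a :: u) v) :
    ∃ p q, v = p ++ a :: q ∧ (∀ b ∈ p, Γ.Adj b a) ∧ Γ.TraceEquiv u (p ++ q) := by
  obtain ⟨p, q, rfl, hp⟩ := exists_eq_append_cons_of_proj fun b hb => by
    rw [← h.proj_eq hb, proj_cons_left]; rfl
  exact ⟨p, q, rfl, hp, (h.trans (traceEquiv_append_cons hp)).of_cons⟩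

end SimpleGraph

theorem mlen_le_length [Monoid M] {f : V → M} {x : M} {w : List V} (h : (w.map f).prod = x) :
    mlen f x ≤ w.length :=
  Nat.sInf_le ⟨w, h, rfl⟩

theorem exists_length_eq_mlen [Monoid M] {f : V → M} {x : M} {w : List V}
    (h : (w.map f).prod = x) : ∃ w' : List V, (w'.map f).prod = x ∧ w'.length = mlen f x :=
  Nat.sInf_mem (s := {n | ∃ w' : List V, (w'.map f).prod = x ∧ w'.length = n})
    ⟨_, w, h, rfl⟩

theorem eq_and_eq_of_pow_mul_eq_pow_mul [Monoid M] {g x y : M} (hg : IsLeftRegular g)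
    (hx : ¬ g ∣ x) (hy : ¬ g ∣ y) {m n : ℕ} (h : g ^ m * x = g ^ n * y) :
    m = n ∧ x = y := by
  induction m generalizing n with
  | zero =>
    cases n with
    | zero => simpa using h
    | succ n =>
      exact (hx ⟨g ^ n * y, by rw [← mul_assoc, ← pow_succ', ← h, pow_zero, one_mul]⟩).elim
  | succ m ih =>
    cases n with
    | zero =>
      exact (hy ⟨g ^ m * x, by rw [← mul_assoc, ← pow_succ', h, pow_zero, one_mul]⟩).elim
    | succ n =>
      rw [pow_succ', pow_succ', mul_assoc, mul_assoc] at h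
      simpa using ih (hg h)

namespace GraphMonoid

variable {Γ : SimpleGraph V} {u v w : List V} {i j a : V} {x y z : GraphMonoid Γ}

def ofList (Γ : SimpleGraph V) (w : List V) : GraphMonoid Γ :=
  (conGen (graphMonoidRel Γ)).mk' (FreeMonoid.ofList w)

@[simp]
theorem ofList_nil : ofList Γ [] = 1 :=
  rfl

@[simp]
theorem ofList_append : ofList Γ (u ++ v) = ofList Γ u * ofList Γ v := by
  simp [ofList, FreeMonoid.ofList_append]

@[simp]
theorem ofList_cons : ofList Γ (a :: u) = gen Γ a * ofList Γ u := by
  simp [ofList, gen, FreeMonoid.ofList_cons]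

theorem ofList_replicate (n : ℕ) (a : V) : ofList Γ (List.replicate n a) = gen Γ a ^ n := by
  induction n with
  | zero => rfl
  | succ n ih => rw [List.replicate_succ, ofList_cons, ih, pow_succ']

theorem prod_map_gen (w : List V) : (w.map (gen Γ)).prod = ofList Γ w := by
  induction w with
  | nil => rfl
  | cons a w ih => simp [ih]

theorem ofList_surjective : Function.Surjective (ofList Γ) := fun x => by
  obtain ⟨y, rfl⟩ := Con.mk'_surjective x
  exact ⟨y.toList, rfl⟩

theorem gen_mul_comm (h : Γ.Adj i j) : gen Γ i * gen Γ j = gen Γ j * gen Γ i :=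
  (Con.eq _).mpr (ConGen.Rel.of _ _ ⟨i, j, h, rfl, rfl⟩)

def traceCon (Γ : SimpleGraph V) : Con (FreeMonoid V) where
  r x y := Γ.TraceEquiv x.toList y.toList
  iseqv := ⟨fun _ => .refl _, .symm, .trans⟩
  mul' h h' := h.append h'

theorem ofList_eq_ofList_iff : ofList Γ u = ofList Γ v ↔ Γ.TraceEquiv u v := by
  refine ⟨fun h => ?_, fun h => h.invariant _ ?_⟩
  · have hle : conGen (graphMonoidRel Γ) ≤ traceCon Γ := by
      refine Con.conGen_le.mpr ?_
      rintro _ _ ⟨i, j, hij, rfl, rfl⟩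
      exact SimpleGraph.SwapStep.traceEquiv ⟨[], [], i, j, hij, rfl, rfl⟩
    exact hle ((Con.eq _).mp h)
  · rintro _ _ ⟨p, q, a, b, hab, rfl, rfl⟩
    simp only [ofList_append, ofList_cons, ← mul_assoc, gen_mul_comm hab]

def lift {N : Type*} [Monoid N] (f : V → N) (hf : ∀ i j, Γ.Adj i j → f i * f j = f j * f i) :
    GraphMonoid Γ →* N :=
  Con.lift _ (FreeMonoid.lift f) <| Con.conGen_le.mpr <| by
    rintro _ _ ⟨i, j, hij, rfl, rfl⟩
    simpa [Con.ker_rel] using hf i j hij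

@[simp]
theorem lift_gen {N : Type*} [Monoid N] (f : V → N)
    (hf : ∀ i j, Γ.Adj i j → f i * f j = f j * f i) (i : V) : lift f hf (gen Γ i) = f i := by
  simp [lift, gen]

theorem mlen_ofList (w : List V) : mlen (gen Γ) (ofList Γ w) = w.length := by
  obtain ⟨w', hw', hlen⟩ := exists_length_eq_mlen (prod_map_gen (Γ := Γ) w)
  rw [← hlen, ← (ofList_eq_ofList_iff.mp ((prod_map_gen w').symm.trans hw')).length_eq]

theorem isLeftRegular_gen (i : V) : IsLeftRegular (gen Γ i) := fun y z h => by
  obtain ⟨u, rfl⟩ := ofList_surjective y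
  obtain ⟨v, rfl⟩ := ofList_surjective z
  simp only [← ofList_cons, ofList_eq_ofList_iff] at h ⊢
  exact h.of_cons

theorem gen_dvd_ofList_iff :
    gen Γ a ∣ ofList Γ w ↔ ∃ p q, w = p ++ a :: q ∧ ∀ b ∈ p, Γ.Adj b a := by
  constructor
  · rintro ⟨z, hz⟩
    obtain ⟨u, rfl⟩ := ofList_surjective z
    rw [← ofList_cons, eq_comm, ofList_eq_ofList_iff] at hz
    obtain ⟨p, q, rfl, hp, -⟩ := hz.exists_of_cons
    exact ⟨p, q, rfl, hp⟩
  · rintro ⟨p, q, rfl, hp⟩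
    exact ⟨ofList Γ (p ++ q), by
      rw [← ofList_cons, ofList_eq_ofList_iff]; exact SimpleGraph.traceEquiv_append_cons hp⟩

theorem gen_dvd_gen_mul_iff (hij : i ≠ j) :
    gen Γ j ∣ gen Γ i * x ↔ Γ.Adj i j ∧ gen Γ j ∣ x := by
  obtain ⟨u, rfl⟩ := ofList_surjective x
  constructor
  · rw [← ofList_cons, gen_dvd_ofList_iff]
    rintro ⟨_ | ⟨c, p⟩, q, hu, hp⟩
    · exact (hij (List.cons.inj hu).1).elim
    · obtain ⟨rfl, rfl⟩ := List.cons.inj hu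
      exact ⟨hp i List.mem_cons_self, gen_dvd_ofList_iff.mpr
        ⟨p, q, rfl, fun b hb => hp b (List.mem_cons_of_mem i hb)⟩⟩
  · rintro ⟨hij, z, hz⟩
    exact ⟨gen Γ i * z, by rw [hz, ← mul_assoc, gen_mul_comm hij, mul_assoc]⟩

def SquareFree (x : GraphMonoid Γ) : Prop :=
  ∀ p a q, ofList Γ (p ++ a :: a :: q) ≠ x

theorem squareFree_one : SquareFree (1 : GraphMonoid Γ) := fun p a q h => by
  simpa using (ofList_eq_ofList_iff.mp (h.trans ofList_nil.symm)).length_eq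

theorem SquareFree.of_gen_mul (h : SquareFree (gen Γ i * x)) : SquareFree x := fun p a q hx =>
  h (i :: p) a q (by rw [List.cons_append, ofList_cons, hx])

theorem SquareFree.not_gen_dvd (h : SquareFree (gen Γ i * x)) : ¬ gen Γ i ∣ x := by
  rintro ⟨z, rfl⟩
  obtain ⟨u, rfl⟩ := ofList_surjective z
  exact h [] i u (by simp)

theorem SquareFree.gen_mul (hx : SquareFree x) (hi : ¬ gen Γ i ∣ x) :
    SquareFree (gen Γ i * x) := by
  obtain ⟨u, rfl⟩ := ofList_surjective x
  intro p a q h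
  rw [← ofList_cons, ofList_eq_ofList_iff] at h
  obtain ⟨s, t, hst, hs, hu⟩ := h.symm.exists_of_cons
  have hx' : ofList Γ (s ++ t) = ofList Γ u := (ofList_eq_ofList_iff.mpr hu).symm
  have hi_s : i ∉ s := fun h => Γ.irrefl (hs i h)
  -- Deleting this `i` from `p ++ a :: a :: q` leaves a word for `x`: either the square survives,
  -- or `i` was one of the two `a`s and is then a first letter of `x`.
  have not_cons : ∀ t', t ≠ i :: t' := by
    rintro t' rfl
    exact hi (hx' ▸ gen_dvd_ofList_iff.mpr ⟨s, t', rfl, hs⟩)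
  rcases List.append_eq_append_iff.mp hst with ⟨l, rfl, hl⟩ | ⟨l, rfl, hl⟩
  · rcases l with _ | ⟨c, _ | ⟨d, l⟩⟩
    · obtain ⟨rfl, rfl⟩ := List.cons.inj hl
      exact not_cons q rfl
    · simp only [List.cons_append, List.nil_append, List.cons.injEq] at hl
      obtain ⟨rfl, rfl, -⟩ := hl
      exact hi_s (by simp)
    · simp only [List.cons_append, List.cons.injEq] at hl
      obtain ⟨rfl, rfl, rfl⟩ := hl
      exact hx p _ (l ++ t) (by simpa using hx')
  · rcases l with _ | ⟨c, l⟩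
    · obtain ⟨rfl, rfl⟩ := List.cons.inj (by simpa using hl)
      exact not_cons q rfl
    · obtain ⟨rfl, rfl⟩ := List.cons.inj hl
      exact hx (s ++ l) a q (by simpa using hx')

noncomputable def toggle (i : V) (y : GraphMonoid Γ) : GraphMonoid Γ :=
  if h : gen Γ i ∣ y then h.choose else gen Γ i * y

theorem toggle_gen_mul (i : V) (z : GraphMonoid Γ) : toggle i (gen Γ i * z) = z := by
  have h : gen Γ i ∣ gen Γ i * z := dvd_mul_right _ _
  rw [toggle, dif_pos h]
  exact isLeftRegular_gen i h.choose_spec.symm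

theorem toggle_of_not_dvd (h : ¬ gen Γ i ∣ y) : toggle i y = gen Γ i * y :=
  dif_neg h

theorem toggle_comm_of_dvd (hij : Γ.Adj i j) (hi : gen Γ i ∣ y) :
    toggle i (toggle j y) = toggle j (toggle i y) := by
  obtain ⟨z, rfl⟩ := hi
  by_cases hj : gen Γ j ∣ z
  · obtain ⟨t, rfl⟩ := hj
    have e : gen Γ i * (gen Γ j * t) = gen Γ j * (gen Γ i * t) := by
      rw [← mul_assoc, gen_mul_comm hij, mul_assoc]
    conv_lhs => rw [e]
    rw [toggle_gen_mul, toggle_gen_mul, toggle_gen_mul, toggle_gen_mul]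
  · have hj' : ¬ gen Γ j ∣ gen Γ i * z := fun h => hj ((gen_dvd_gen_mul_iff hij.ne).mp h).2
    rw [toggle_of_not_dvd hj', ← mul_assoc, ← gen_mul_comm hij, mul_assoc, toggle_gen_mul,
      toggle_gen_mul, toggle_of_not_dvd hj]

theorem toggle_comm (hij : Γ.Adj i j) (y : GraphMonoid Γ) :
    toggle i (toggle j y) = toggle j (toggle i y) := by
  by_cases hi : gen Γ i ∣ y
  · exact toggle_comm_of_dvd hij hi
  by_cases hj : gen Γ j ∣ y
  · exact (toggle_comm_of_dvd hij.symm hj).symm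
  have hi' : ¬ gen Γ i ∣ gen Γ j * y := fun h => hi ((gen_dvd_gen_mul_iff hij.ne').mp h).2
  have hj' : ¬ gen Γ j ∣ gen Γ i * y := fun h => hj ((gen_dvd_gen_mul_iff hij.ne).mp h).2
  rw [toggle_of_not_dvd hi, toggle_of_not_dvd hj, toggle_of_not_dvd hi', toggle_of_not_dvd hj',
    ← mul_assoc, ← mul_assoc, gen_mul_comm hij]

theorem SquareFree.toggle (hy : SquareFree y) : SquareFree (toggle i y) := by
  by_cases hi : gen Γ i ∣ y
  · obtain ⟨z, rfl⟩ := hi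
    rw [toggle_gen_mul]
    exact hy.of_gen_mul
  · rw [toggle_of_not_dvd hi]
    exact hy.gen_mul hi

theorem toggle_toggle (hy : SquareFree y) : toggle i (toggle i y) = y := by
  by_cases hi : gen Γ i ∣ y
  · obtain ⟨z, rfl⟩ := hi
    rw [toggle_gen_mul, toggle_of_not_dvd hy.not_gen_dvd]
  · rw [toggle_of_not_dvd hi, toggle_gen_mul]

theorem mlen_toggle_le (i : V) (y : GraphMonoid Γ) :
    mlen (gen Γ) (toggle i y) ≤ mlen (gen Γ) y + 1 := by
  by_cases hi : gen Γ i ∣ y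
  · obtain ⟨z, rfl⟩ := hi
    obtain ⟨u, rfl⟩ := ofList_surjective z
    rw [toggle_gen_mul, ← ofList_cons, mlen_ofList, mlen_ofList, List.length_cons]
    omega
  · obtain ⟨u, rfl⟩ := ofList_surjective y
    simp [toggle_of_not_dvd hi, ← ofList_cons, mlen_ofList]

noncomputable def absorb (i : V) (y : GraphMonoid Γ) : GraphMonoid Γ :=
  if gen Γ i ∣ y then y else gen Γ i * y

theorem absorb_of_dvd (h : gen Γ i ∣ y) : absorb i y = y :=
  if_pos h

theorem absorb_of_not_dvd (h : ¬ gen Γ i ∣ y) : absorb i y = gen Γ i * y :=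
  if_neg h

theorem gen_dvd_absorb (i : V) (y : GraphMonoid Γ) : gen Γ i ∣ absorb i y := by
  by_cases h : gen Γ i ∣ y
  · rwa [absorb_of_dvd h]
  · rw [absorb_of_not_dvd h]
    exact dvd_mul_right _ _

theorem absorb_absorb (i : V) (y : GraphMonoid Γ) : absorb i (absorb i y) = absorb i y :=
  absorb_of_dvd (gen_dvd_absorb i y)

theorem absorb_comm_of_dvd (hij : Γ.Adj i j) (hi : gen Γ i ∣ y) :
    absorb i (absorb j y) = absorb j (absorb i y) := by
  rw [absorb_of_dvd hi, absorb_of_dvd]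
  by_cases hj : gen Γ j ∣ y
  · rwa [absorb_of_dvd hj]
  · rw [absorb_of_not_dvd hj]
    exact (gen_dvd_gen_mul_iff hij.ne').mpr ⟨hij.symm, hi⟩

theorem absorb_comm (hij : Γ.Adj i j) (y : GraphMonoid Γ) :
    absorb i (absorb j y) = absorb j (absorb i y) := by
  by_cases hi : gen Γ i ∣ y
  · exact absorb_comm_of_dvd hij hi
  by_cases hj : gen Γ j ∣ y
  · exact (absorb_comm_of_dvd hij.symm hj).symm
  have hi' : ¬ gen Γ i ∣ gen Γ j * y := fun h => hi ((gen_dvd_gen_mul_iff hij.ne').mp h).2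
  have hj' : ¬ gen Γ j ∣ gen Γ i * y := fun h => hj ((gen_dvd_gen_mul_iff hij.ne).mp h).2
  rw [absorb_of_not_dvd hi, absorb_of_not_dvd hj, absorb_of_not_dvd hi', absorb_of_not_dvd hj',
    ← mul_assoc, ← mul_assoc, gen_mul_comm hij]

end GraphMonoid

namespace RACG

variable {Γ : SimpleGraph V} {i j : V}

theorem gen_mul_self (i : V) : gen Γ i * gen Γ i = 1 := by
  have h := PresentedGroup.one_of_mem (rels := racgRels Γ) (Or.inr ⟨i, rfl⟩)
  rwa [map_mul] at h

theorem gen_mul_comm (hij : Γ.Adj i j) : gen Γ i * gen Γ j = gen Γ j * gen Γ i := by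
  have h := PresentedGroup.one_of_mem (rels := racgRels Γ) (Or.inl ⟨i, j, hij, rfl⟩)
  simp only [map_mul, map_inv] at h
  exact commutatorElement_eq_one_iff_mul_comm.mp h

end RACG

namespace GraphMonoid

variable {Γ : SimpleGraph V} {i : V}

noncomputable def toRACG (Γ : SimpleGraph V) : GraphMonoid Γ →* RACG Γ :=
  lift (RACG.gen Γ) fun _ _ h => RACG.gen_mul_comm h

theorem toRACG_gen (i : V) : toRACG Γ (gen Γ i) = RACG.gen Γ i :=
  lift_gen _ _ i

theorem toRACG_ofList (w : List V) : toRACG Γ (ofList Γ w) = (w.map (RACG.gen Γ)).prod := by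
  induction w with
  | nil => simp
  | cons a w ih => rw [ofList_cons, map_mul, toRACG_gen, ih, List.map_cons, List.prod_cons]

theorem toRACG_toggle (i : V) (y : GraphMonoid Γ) :
    toRACG Γ (toggle i y) = RACG.gen Γ i * toRACG Γ y := by
  by_cases hi : gen Γ i ∣ y
  · obtain ⟨z, rfl⟩ := hi
    rw [toggle_gen_mul, map_mul, toRACG_gen, ← mul_assoc, RACG.gen_mul_self, one_mul]
  · rw [toggle_of_not_dvd hi, map_mul, toRACG_gen]

noncomputable def togglePerm (Γ : SimpleGraph V) (i : V) :
    Equiv.Perm {y : GraphMonoid Γ // SquareFree y} :=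
  Function.Involutive.toPerm (fun y => ⟨toggle i y, y.2.toggle⟩) fun y =>
    Subtype.ext (toggle_toggle y.2)

theorem togglePerm_apply (i : V) (y : {y : GraphMonoid Γ // SquareFree y}) :
    (togglePerm Γ i y).1 = toggle i y.1 :=
  rfl

theorem togglePerm_inv (i : V) : (togglePerm Γ i)⁻¹ = togglePerm Γ i :=
  inv_eq_of_mul_eq_one_right <| Equiv.ext fun y => Subtype.ext (toggle_toggle y.2)

noncomputable def racgAction (Γ : SimpleGraph V) :
    RACG Γ →* Equiv.Perm {y : GraphMonoid Γ // SquareFree y} :=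
  PresentedGroup.toGroup (f := togglePerm Γ) <| by
    rintro r (⟨i, j, hij, rfl⟩ | ⟨i, rfl⟩) <;> ext y <;>
      simp only [map_mul, map_inv, FreeGroup.lift_apply_of, togglePerm_inv, Equiv.Perm.coe_mul,
        Function.comp_apply, togglePerm_apply, Equiv.Perm.coe_one, id_eq]
    · rw [← toggle_comm hij, toggle_toggle y.2.toggle.toggle, toggle_toggle y.2]
    · exact toggle_toggle y.2

theorem racgAction_gen (i : V) : racgAction Γ (RACG.gen Γ i) = togglePerm Γ i :=
  PresentedGroup.toGroup.of _

theorem toRACG_racgAction (g : RACG Γ) (y : {y : GraphMonoid Γ // SquareFree y}) :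
    toRACG Γ (racgAction Γ g y) = g * toRACG Γ y := by
  have hg : g ∈ Subgroup.closure (Set.range (RACG.gen Γ)) := by
    rw [show RACG.gen Γ = PresentedGroup.of from rfl, PresentedGroup.closure_range_of]
    exact Subgroup.mem_top g
  induction hg using Subgroup.closure_induction generalizing y with
  | mem _ h =>
    obtain ⟨i, rfl⟩ := h
    rw [racgAction_gen]
    exact toRACG_toggle i y.1
  | one => simp
  | mul g h _ _ ihg ihh => rw [map_mul, Equiv.Perm.mul_apply, ihg, ihh, mul_assoc]
  | inv g _ ih =>
    have h := ih (racgAction Γ g⁻¹ y)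
    rw [← Equiv.Perm.mul_apply, ← map_mul, mul_inv_cancel, map_one, Equiv.Perm.one_apply] at h
    rw [h, inv_mul_cancel_left]

noncomputable def toSquareFree (g : RACG Γ) : {y : GraphMonoid Γ // SquareFree y} :=
  racgAction Γ g ⟨1, squareFree_one⟩

theorem toSquareFree_gen_mul (i : V) (g : RACG Γ) :
    (toSquareFree (RACG.gen Γ i * g)).1 = toggle i (toSquareFree g) := by
  rw [toSquareFree, map_mul, Equiv.Perm.mul_apply, racgAction_gen]
  rfl

theorem toSquareFree_prod (w : List V) (hw : SquareFree (ofList Γ w)) :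
    (toSquareFree (w.map (RACG.gen Γ)).prod).1 = ofList Γ w := by
  induction w with
  | nil => simp [toSquareFree]
  | cons a w ih =>
    rw [ofList_cons] at hw ⊢
    rw [List.map_cons, List.prod_cons, toSquareFree_gen_mul, ih hw.of_gen_mul,
      toggle_of_not_dvd hw.not_gen_dvd]

theorem mlen_toSquareFree_prod_le (w : List V) :
    mlen (gen Γ) (toSquareFree (w.map (RACG.gen Γ)).prod).1 ≤ w.length := by
  induction w with
  | nil => simp [toSquareFree, ← ofList_nil, mlen_ofList]
  | cons a w ih =>
    rw [List.map_cons, List.prod_cons, toSquareFree_gen_mul, List.length_cons]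
    exact (mlen_toggle_le a _).trans (Nat.add_le_add_right ih 1)

noncomputable def racgEquivSquareFree (Γ : SimpleGraph V) :
    RACG Γ ≃ {y : GraphMonoid Γ // SquareFree y} where
  toFun := toSquareFree
  invFun y := toRACG Γ y
  left_inv g := by simp [toSquareFree, toRACG_racgAction]
  right_inv y := by
    obtain ⟨w, hw⟩ := ofList_surjective y.1
    apply Subtype.ext
    show (toSquareFree (toRACG Γ y.1)).1 = y.1
    rw [← hw, toRACG_ofList, toSquareFree_prod w (hw ▸ y.2)]

theorem mlen_racgEquivSquareFree (g : RACG Γ) :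
    mlen (gen Γ) (racgEquivSquareFree Γ g).1 = mlen (RACG.gen Γ) g := by
  obtain ⟨w, hw⟩ := ofList_surjective (racgEquivSquareFree Γ g).1
  have hprod : (w.map (RACG.gen Γ)).prod = g := by
    rw [← toRACG_ofList, hw]
    exact (racgEquivSquareFree Γ).left_inv g
  obtain ⟨w₀, hw₀, hlen⟩ := exists_length_eq_mlen hprod
  refine le_antisymm ?_ ?_
  · rw [← hlen, ← hw₀]
    exact mlen_toSquareFree_prod_le w₀
  · rw [← hw, mlen_ofList]
    exact mlen_le_length hprod

end GraphMonoid

def expandWord (c : List (V × ℕ)) : List V :=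
  c.flatMap fun p => List.replicate (p.2 + 1) p.1

theorem expandWord_cons (p : V × ℕ) (c : List (V × ℕ)) :
    expandWord (p :: c) = List.replicate (p.2 + 1) p.1 ++ expandWord c :=
  List.flatMap_cons

theorem length_expandWord (c : List (V × ℕ)) :
    (expandWord c).length = (c.map Prod.snd).sum + c.length := by
  induction c with
  | nil => rfl
  | cons p c ih =>
    rw [expandWord_cons, List.length_append, List.length_replicate, ih]
    simp only [List.map_cons, List.sum_cons, List.length_cons]
    omega

theorem SimpleGraph.TraceEquiv.expandWord {Γ : SimpleGraph V} {c d : List (V × ℕ)}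
    (h : (Γ.comap Prod.fst).TraceEquiv c d) : Γ.TraceEquiv (expandWord c) (expandWord d) :=
  h.flatMap _ fun _ _ hab _ hx _ hy => by
    rw [List.eq_of_mem_replicate hx, List.eq_of_mem_replicate hy]
    exact hab

namespace GraphMonoid

variable {Γ : SimpleGraph V} {i : V} {x y : GraphMonoid Γ} {c d : List (V × ℕ)}
  {l l' : List ℕ}

theorem ofList_expandWord_cons (p : V × ℕ) (c : List (V × ℕ)) :
    ofList Γ (expandWord (p :: c)) = gen Γ p.1 ^ (p.2 + 1) * ofList Γ (expandWord c) := by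
  rw [expandWord_cons, ofList_append, ofList_replicate]

theorem exists_traceEquiv_expandWord (w : List V) :
    ∃ c, Γ.TraceEquiv (expandWord c) w ∧ SquareFree (ofList Γ (c.map Prod.fst)) := by
  induction w with
  | nil => exact ⟨[], .refl _, squareFree_one⟩
  | cons i w ih =>
    obtain ⟨c, hc, hsf⟩ := ih
    by_cases hi : gen Γ i ∣ ofList Γ (c.map Prod.fst)
    · -- Commute an occurrence of `i` to the front of `c` and raise its exponent.
      obtain ⟨z, hz⟩ := hi
      obtain ⟨u, rfl⟩ := ofList_surjective z
      rw [← ofList_cons, ofList_eq_ofList_iff] at hz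
      obtain ⟨_ | ⟨⟨a, e⟩, d⟩, hcd, hd⟩ := hz.exists_comap Prod.fst
      · simp at hd
      obtain ⟨rfl, -⟩ := List.cons.inj hd
      refine ⟨(a, e + 1) :: d, ?_, ?_⟩
      · have hexp : expandWord ((a, e + 1) :: d) = a :: expandWord ((a, e) :: d) := by
          simp [expandWord_cons, List.replicate_succ]
        rw [hexp]
        exact (hcd.expandWord.symm.trans hc).cons a
      · have hfst : ofList Γ (c.map Prod.fst) = ofList Γ (((a, e + 1) :: d).map Prod.fst) :=
          ofList_eq_ofList_iff.mpr (hcd.map Prod.fst)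
        rwa [← hfst]
    · refine ⟨(i, 0) :: c, by simpa [expandWord_cons] using hc.cons i, ?_⟩
      rw [List.map_cons, ofList_cons]
      exact hsf.gen_mul hi

noncomputable def absorbHom (Γ : SimpleGraph V) :
    GraphMonoid Γ →* Function.End (GraphMonoid Γ) :=
  lift (N := Function.End (GraphMonoid Γ)) absorb fun _ _ h => funext (absorb_comm h)

noncomputable def collapse (x : GraphMonoid Γ) : GraphMonoid Γ :=
  absorbHom Γ x 1

theorem absorbHom_gen (i : V) : absorbHom Γ (gen Γ i) = absorb i :=
  lift_gen _ _ i

theorem collapse_one : collapse (1 : GraphMonoid Γ) = 1 :=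
  rfl

theorem collapse_gen_mul (i : V) (x : GraphMonoid Γ) :
    collapse (gen Γ i * x) = absorb i (collapse x) := by
  simp only [collapse, map_mul, absorbHom_gen]
  rfl

theorem collapse_gen_pow_mul (i : V) (n : ℕ) (x : GraphMonoid Γ) :
    collapse (gen Γ i ^ (n + 1) * x) = absorb i (collapse x) := by
  induction n with
  | zero => rw [zero_add, pow_one, collapse_gen_mul]
  | succ n ih => rw [pow_succ', mul_assoc, collapse_gen_mul, ih, absorb_absorb]

theorem gen_dvd_collapse (h : gen Γ i ∣ x) : gen Γ i ∣ collapse x := by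
  obtain ⟨z, rfl⟩ := h
  rw [collapse_gen_mul]
  exact gen_dvd_absorb i _

theorem collapse_ofList_expandWord (h : SquareFree (ofList Γ (c.map Prod.fst))) :
    collapse (ofList Γ (expandWord c)) = ofList Γ (c.map Prod.fst) := by
  induction c with
  | nil => exact collapse_one
  | cons p c ih =>
    rw [List.map_cons, ofList_cons] at h ⊢
    rw [ofList_expandWord_cons, collapse_gen_pow_mul, ih h.of_gen_mul,
      absorb_of_not_dvd h.not_gen_dvd]

theorem not_gen_dvd_ofList_expandWord {a : V}
    (h : SquareFree (gen Γ a * ofList Γ (c.map Prod.fst))) :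
    ¬ gen Γ a ∣ ofList Γ (expandWord c) := fun hd =>
  h.not_gen_dvd (collapse_ofList_expandWord h.of_gen_mul ▸ gen_dvd_collapse hd)

theorem eq_of_ofList_expandWord_eq (hfst : c.map Prod.fst = d.map Prod.fst)
    (hsf : SquareFree (ofList Γ (c.map Prod.fst)))
    (h : ofList Γ (expandWord c) = ofList Γ (expandWord d)) : c = d := by
  induction c generalizing d with
  | nil => exact (List.map_eq_nil_iff.mp hfst.symm).symm
  | cons p c ih =>
    obtain ⟨q, d, rfl, hqp, hdc⟩ := List.map_eq_cons_iff.mp hfst.symm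
    rw [List.map_cons, ofList_cons] at hsf
    rw [ofList_expandWord_cons, ofList_expandWord_cons, hqp] at h
    obtain ⟨he, hrest⟩ := eq_and_eq_of_pow_mul_eq_pow_mul (isLeftRegular_gen p.1)
      (not_gen_dvd_ofList_expandWord hsf) (not_gen_dvd_ofList_expandWord (hdc ▸ hsf)) h
    rw [ih hdc.symm hsf.of_gen_mul hrest, Prod.ext hqp.symm (Nat.succ_injective he)]

noncomputable def toWord (x : GraphMonoid Γ) : List V :=
  (ofList_surjective x).choose

theorem ofList_toWord (x : GraphMonoid Γ) : ofList Γ (toWord x) = x :=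
  (ofList_surjective x).choose_spec

theorem length_toWord (x : GraphMonoid Γ) : (toWord x).length = mlen (gen Γ) x := by
  conv_rhs => rw [← ofList_toWord x]
  rw [mlen_ofList]

noncomputable def inflate (y : GraphMonoid Γ) (l : List ℕ) : GraphMonoid Γ :=
  ofList Γ (expandWord ((toWord y).zip l))

theorem map_fst_zip_toWord (hl : l.length = mlen (gen Γ) y) :
    ((toWord y).zip l).map Prod.fst = toWord y :=
  List.map_fst_zip (by rw [length_toWord, hl])

theorem map_snd_zip_toWord (hl : l.length = mlen (gen Γ) y) :
    ((toWord y).zip l).map Prod.snd = l :=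
  List.map_snd_zip (by rw [length_toWord, hl])

theorem mlen_inflate (hl : l.length = mlen (gen Γ) y) :
    mlen (gen Γ) (inflate y l) = l.sum + l.length := by
  rw [inflate, mlen_ofList, length_expandWord, map_snd_zip_toWord hl, List.length_zip,
    length_toWord, hl, min_self]

theorem collapse_inflate (hy : SquareFree y) (hl : l.length = mlen (gen Γ) y) :
    collapse (inflate y l) = y := by
  rw [inflate, collapse_ofList_expandWord, map_fst_zip_toWord hl, ofList_toWord]
  rwa [map_fst_zip_toWord hl, ofList_toWord]

theorem eq_of_inflate_eq (hy : SquareFree y) (hl : l.length = mlen (gen Γ) y)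
    (hl' : l'.length = mlen (gen Γ) y) (h : inflate y l = inflate y l') : l = l' := by
  have hzip := eq_of_ofList_expandWord_eq
    (by rw [map_fst_zip_toWord hl, map_fst_zip_toWord hl'])
    (by rwa [map_fst_zip_toWord hl, ofList_toWord]) h
  rw [← map_snd_zip_toWord hl, ← map_snd_zip_toWord hl', hzip]

theorem exists_inflate_eq (x : GraphMonoid Γ) :
    ∃ y l, SquareFree y ∧ l.length = mlen (gen Γ) y ∧ inflate y l = x := by
  obtain ⟨c, hc, hsf⟩ := exists_traceEquiv_expandWord (Γ := Γ) (toWord x)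
  set y := ofList Γ (c.map Prod.fst)
  obtain ⟨d, hcd, hd⟩ :=
    (ofList_eq_ofList_iff.mp (ofList_toWord y).symm).exists_comap Prod.fst
  refine ⟨y, d.map Prod.snd, hsf, ?_, ?_⟩
  · rw [List.length_map, ← length_toWord, ← hd, List.length_map]
  · have hdd : (d.map Prod.fst).zip (d.map Prod.snd) = d := by simpa using List.zip_unzip d
    rw [inflate, ← hd, hdd]
    conv_rhs => rw [← ofList_toWord x]
    exact ofList_eq_ofList_iff.mpr (hcd.expandWord.symm.trans hc)

end GraphMonoid

def listSumEquiv (k s : ℕ) :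
    {l : List ℕ // l.length = k ∧ l.sum = s} ≃ {P : Fin k → ℕ // ∑ i, P i = s} :=
  (Equiv.subtypeSubtypeEquivSubtypeInter (fun l : List ℕ => l.length = k) (·.sum = s)).symm.trans
    ((Equiv.vectorEquivFin ℕ k).subtypeEquiv fun v => by
      simp [Equiv.vectorEquivFin, ← List.sum_ofFn, ← List.Vector.toList_ofFn]
      exact Iff.rfl)

instance (k s : ℕ) : Finite {l : List ℕ // l.length = k ∧ l.sum = s} :=
  Finite.of_equiv _ ((Sym.equivNatSumOfFintype (Fin k) s).trans (listSumEquiv k s).symm)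

theorem card_list_length_sum (k s : ℕ) :
    Nat.card {l : List ℕ // l.length = k ∧ l.sum = s} = (k + s - 1).choose s := by
  rw [Nat.card_congr ((listSumEquiv k s).trans (Sym.equivNatSumOfFintype (Fin k) s).symm),
    Nat.card_eq_fintype_card, Sym.card_sym_eq_multichoose, Fintype.card_fin, Nat.multichoose_eq]

namespace GraphMonoid

variable {Γ : SimpleGraph V}

theorem finite_setOf_mlen_eq [Finite V] (k : ℕ) :
    {x : GraphMonoid Γ | mlen (gen Γ) x = k}.Finite := by
  refine ((List.finite_length_eq V k).image (ofList Γ)).subset fun x hx => ?_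
  exact ⟨toWord x, length_toWord x |>.trans hx, ofList_toWord x⟩

instance [Finite V] (k : ℕ) :
    Finite {y : GraphMonoid Γ // SquareFree y ∧ mlen (gen Γ) y = k} :=
  ((finite_setOf_mlen_eq k).subset fun _ hy => hy.2).to_subtype

theorem card_squareFree_mlen_eq (k : ℕ) :
    Nat.card {y : GraphMonoid Γ // SquareFree y ∧ mlen (gen Γ) y = k} =
      Nat.card {g : RACG Γ // mlen (RACG.gen Γ) g = k} := by
  refine Nat.card_congr ((Equiv.subtypeSubtypeEquivSubtypeInter _ _).symm.trans
    ((racgEquivSquareFree Γ).subtypeEquiv fun g => ?_).symm)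
  rw [mlen_racgEquivSquareFree]

abbrev InflationData (Γ : SimpleGraph V) (n : ℕ) :=
  Σ k : Finset.Icc 1 n, {y : GraphMonoid Γ // SquareFree y ∧ mlen (gen Γ) y = k} ×
    {l : List ℕ // l.length = k ∧ l.sum = n - k}

noncomputable def inflateData {n : ℕ} (t : InflationData Γ n) :
    {x : GraphMonoid Γ // mlen (gen Γ) x = n} :=
  ⟨inflate t.2.1.1 t.2.2.1, by
    obtain ⟨⟨k, hk⟩, ⟨y, -, hyk⟩, ⟨l, hlk, hls⟩⟩ := t
    rw [mlen_inflate (hlk.trans hyk.symm), hls, hlk]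
    exact Nat.sub_add_cancel (Finset.mem_Icc.mp hk).2⟩

theorem inflateData_injective (n : ℕ) : Function.Injective (inflateData (Γ := Γ) (n := n)) := by
  rintro ⟨⟨k, _⟩, ⟨y, hy, hyk⟩, ⟨l, hlk, _⟩⟩ ⟨⟨k', _⟩, ⟨y', hy', hyk'⟩, ⟨l', hlk', _⟩⟩ h
  have hinf : inflate y l = inflate y' l' := congrArg Subtype.val h
  obtain rfl : y = y' := (collapse_inflate hy (hlk.trans hyk.symm)).symm.trans
    (hinf ▸ collapse_inflate hy' (hlk'.trans hyk'.symm))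
  obtain rfl : k = k' := hyk.symm.trans hyk'
  obtain rfl : l = l' := eq_of_inflate_eq hy (hlk.trans hyk.symm) (hlk'.trans hyk.symm) hinf
  rfl

theorem inflateData_surjective {n : ℕ} (hn : 1 ≤ n) :
    Function.Surjective (inflateData (Γ := Γ) (n := n)) := by
  rintro ⟨x, hx⟩
  obtain ⟨y, l, hy, hl, rfl⟩ := exists_inflate_eq x
  have hn' : l.sum + mlen (gen Γ) y = n := hl ▸ (mlen_inflate hl).symm.trans hx
  have hk : mlen (gen Γ) y ∈ Finset.Icc 1 n := by
    refine Finset.mem_Icc.mpr ⟨Nat.one_le_iff_ne_zero.mpr fun h0 => ?_, by omega⟩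
    rw [h0, List.length_eq_zero_iff] at hl
    simp [hl, h0] at hn'
    omega
  exact ⟨⟨⟨_, hk⟩, ⟨y, hy, rfl⟩, ⟨l, hl, Nat.eq_sub_of_add_eq hn'⟩⟩, rfl⟩

end GraphMonoid

theorem monoid_racg_growth_relation (m : ℕ) (Γ : SimpleGraph (Fin m)) (n : ℕ) (hn : 1 ≤ n) :
    Nat.card {x : GraphMonoid Γ // mlen (GraphMonoid.gen Γ) x = n} =
      ∑ k ∈ Finset.Icc 1 n,
        Nat.card {x : RACG Γ // mlen (RACG.gen Γ) x = k} * (n - 1).choose (k - 1) := by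
  rw [← Nat.card_eq_of_bijective _ ⟨GraphMonoid.inflateData_injective n,
    GraphMonoid.inflateData_surjective hn⟩, Nat.card_sigma,
    ← Finset.sum_coe_sort (Finset.Icc 1 n)]
  refine Fintype.sum_congr _ _ fun ⟨k, hk⟩ => ?_
  obtain ⟨hk1, hkn⟩ := Finset.mem_Icc.mp hk
  rw [Nat.card_prod, GraphMonoid.card_squareFree_mlen_eq, card_list_length_sum,
    Nat.choose_symm_of_eq_add (show k + (n - k) - 1 = (n - k) + (k - 1) by omega),
    show k + (n - k) - 1 = n - 1 by omega]
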